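/- arXiv:2001.00665 — 3 statements merged into one kernel-verified Lean document; each statement's English description precedes it below -/
import Mathlib

section
/- Let u_1, …, u_m : ℝ^d → ℝ be differentiable functions with G-bounded gradient dissimilarity, i.e., ‖∇u_i(x) − ∇u_j(y)‖ ≤ G‖x − y‖ for all i, j ∈ {1, …, m} and all x, y ∈ ℝ^d. For x = (x^{(1)}, …, x^{(m)}) ∈ (ℝ^d)^m, write x̄ = (1/m)∑_{i=1}^m x^{(i)}, let ∇U_v(x) ∈ (ℝ^d)^m denote the stacked vector whose i-th block is ∇u_i(x^{(i)}), and let 1_m ⊗ v denote the stack of m copies of v ∈ ℝ^d. Then ‖∇U_v(x) − 1_m ⊗ ((1/m)∑_{j=1}^m ∇u_j(x^{(j)}))‖ ≤ 2G ‖x − 1_m ⊗ x̄‖, where the norm is the Euclidean norm on (ℝ^d)^m. -/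
/-!
The blockwise mean `ḡ` of `g₁, …, gₘ` minimises `v ↦ ∑ᵢ ‖gᵢ - v‖²`: the deviations `gᵢ - ḡ` sum
to zero, so `∑ᵢ ‖gᵢ - v‖² = ∑ᵢ ‖gᵢ - ḡ‖² + m ‖ḡ - v‖²`. Comparing with `v = ∇u_k(x̄)` for a fixed
`k`, dissimilarity bounds each `‖∇u_i(x⁽ⁱ⁾) - v‖` by `G ‖x⁽ⁱ⁾ - x̄‖`, which already gives the bound
with constant `G`.
-/

open Finset RealInnerProductSpace

section Mean

variable {ι E : Type*} [Fintype ι]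

theorem sum_sub_mean_eq_zero [AddCommGroup E] [Module ℝ E] (g : ι → E) :
    ∑ i, (g i - (Fintype.card ι : ℝ)⁻¹ • ∑ j, g j) = 0 := by
  rcases isEmpty_or_nonempty ι with hι | hι
  · simp
  rw [sum_sub_distrib, sum_const, card_univ, ← Nat.cast_smul_eq_nsmul ℝ, smul_smul,
    mul_inv_cancel₀ (by positivity), one_smul, sub_self]

variable [NormedAddCommGroup E] [InnerProductSpace ℝ E]

theorem sum_norm_sub_mean_sq_le (g : ι → E) (v : E) :
    ∑ i, ‖g i - (Fintype.card ι : ℝ)⁻¹ • ∑ j, g j‖ ^ 2 ≤ ∑ i, ‖g i - v‖ ^ 2 := by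
  set μ := (Fintype.card ι : ℝ)⁻¹ • ∑ j, g j
  calc ∑ i, ‖g i - μ‖ ^ 2
      ≤ ∑ i, (‖g i - μ‖ ^ 2 + 2 * ⟪g i - μ, μ - v⟫ + ‖μ - v‖ ^ 2) := by
        rw [sum_add_distrib, sum_add_distrib, ← mul_sum, ← sum_inner, sum_sub_mean_eq_zero,
          inner_zero_left, mul_zero, add_zero]
        exact le_add_of_nonneg_right (by positivity)
    _ = ∑ i, ‖g i - v‖ ^ 2 := by
        simp_rw [← norm_add_sq_real, sub_add_sub_cancel]

theorem PiLp.norm_sub_mean_le (g : ι → E) (v : E) :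
    ‖WithLp.toLp 2 (fun i => g i - (Fintype.card ι : ℝ)⁻¹ • ∑ j, g j)‖ ≤
      ‖WithLp.toLp 2 (fun i => g i - v)‖ := by
  rw [← sq_le_sq₀ (norm_nonneg _) (norm_nonneg _), PiLp.norm_sq_eq_of_L2, PiLp.norm_sq_eq_of_L2]
  exact sum_norm_sub_mean_sq_le g v

end Mean

theorem PiLp.norm_le_mul_norm_of_forall {ι : Type*} [Fintype ι] {E : ι → Type*}
    [∀ i, NormedAddCommGroup (E i)] {G : ℝ} {a b : ∀ i, E i} (h : ∀ i, ‖a i‖ ≤ G * ‖b i‖) :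
    ‖WithLp.toLp 2 a‖ ≤ G * ‖WithLp.toLp 2 b‖ := by
  have hGb : 0 ≤ G * ‖WithLp.toLp 2 b‖ := by
    rcases eq_or_ne b 0 with rfl | hb
    · simp
    obtain ⟨i, hi⟩ := Function.ne_iff.mp hb
    have hG : 0 ≤ G :=
      nonneg_of_mul_nonneg_left ((norm_nonneg _).trans (h i)) (norm_pos_iff.mpr hi)
    positivity
  rw [← sq_le_sq₀ (norm_nonneg _) hGb, mul_pow, PiLp.norm_sq_eq_of_L2, PiLp.norm_sq_eq_of_L2,
    mul_sum]
  gcongr with i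
  rw [← mul_pow]
  exact pow_le_pow_left₀ (norm_nonneg _) (h i) 2

theorem stacked_gradient_consensus_bound_dissimilarity_general
    (m d : ℕ) (hm : 1 ≤ m) (G : ℝ)
    (u : Fin m → EuclideanSpace ℝ (Fin d) → ℝ)
    (hdissim : ∀ i j : Fin m, ∀ x y : EuclideanSpace ℝ (Fin d),
      ‖gradient (u i) x - gradient (u j) y‖ ≤ G * ‖x - y‖)
    (x : PiLp 2 fun _ : Fin m => EuclideanSpace ℝ (Fin d)) :
    ‖(WithLp.equiv 2 (∀ _ : Fin m, EuclideanSpace ℝ (Fin d))).symm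
        (fun i => gradient (u i) (x i) - (m : ℝ)⁻¹ • ∑ j, gradient (u j) (x j))‖ ≤
      2 * G * ‖(WithLp.equiv 2 (∀ _ : Fin m, EuclideanSpace ℝ (Fin d))).symm
        (fun i => x i - (m : ℝ)⁻¹ • ∑ j, x j)‖ := by
  rw [WithLp.equiv_symm_apply]
  set xMean := (m : ℝ)⁻¹ • ∑ j, x j
  set v := gradient (u ⟨0, hm⟩) xMean
  have hmean := PiLp.norm_sub_mean_le (fun i => gradient (u i) (x i)) v
  rw [Fintype.card_fin] at hmean
  have hdev : ‖WithLp.toLp 2 (fun i => gradient (u i) (x i) - v)‖ ≤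
      G * ‖WithLp.toLp 2 (fun i => x i - xMean)‖ :=
    PiLp.norm_le_mul_norm_of_forall fun i => hdissim i ⟨0, hm⟩ (x i) xMean
  -- `G` may be negative; `hdev` shows `G * ‖x - 1 ⊗ x̄‖ ≥ 0`, so doubling it only weakens the bound.
  linarith [norm_nonneg (WithLp.toLp 2 (fun i => gradient (u i) (x i) - v))]

/-- If the family `u i : ℝ^d → ℝ` has `G`-bounded gradient
dissimilarity (`‖∇u_i(x) - ∇u_j(y)‖ ≤ G‖x - y‖` for all `i, j, x, y`), then the
stacked gradient vector `∇U_v(x)` deviates from the stack of its blockwise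
average by at most `2G` times the consensus error `‖x - 1 ⊗ x̄‖`, in the
Euclidean norm on `(ℝ^d)^m`. -/
theorem stacked_gradient_consensus_bound_dissimilarity
    (m d : ℕ) (hm : 1 ≤ m) (hd : 1 ≤ d) (G : ℝ)
    (u : Fin m → EuclideanSpace ℝ (Fin d) → ℝ)
    (hdiff : ∀ i, Differentiable ℝ (u i))
    (hdissim : ∀ i j : Fin m, ∀ x y : EuclideanSpace ℝ (Fin d),
      ‖gradient (u i) x - gradient (u j) y‖ ≤ G * ‖x - y‖)
    (x : PiLp 2 fun _ : Fin m => EuclideanSpace ℝ (Fin d)) :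
    ‖(WithLp.equiv 2 (∀ _ : Fin m, EuclideanSpace ℝ (Fin d))).symm
        (fun i => gradient (u i) (x i) - (m : ℝ)⁻¹ • ∑ j, gradient (u j) (x j))‖ ≤
      2 * G * ‖(WithLp.equiv 2 (∀ _ : Fin m, EuclideanSpace ℝ (Fin d))).symm
        (fun i => x i - (m : ℝ)⁻¹ • ∑ j, x j)‖ :=
  stacked_gradient_consensus_bound_dissimilarity_general m d hm G u hdissim x
end

section
/- Let L, m, d, h > 0 satisfy m·h ≤ 1 and L·h ≤ 1 (so that ρ := max(1 − m·h, L·h − 1) = 1 − m·h ∈ [0, 1)), and let χ = 7√2/6. Let (w_k)_{k≥0} be a sequence of nonnegative reals satisfying, for all k ≥ 0, w_{k+1} ≤ ρ·w_k + χ·L·(h³·d)^{1/2} + L·h/(k+2). Then limsup_{K→∞} w_K ≤ χ·L·(h·d)^{1/2}/m. -/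
open Filter Topology

/-!
The affine map `x ↦ ρ x + b` with `0 ≤ ρ < 1` contracts towards its fixed point `b / (1 - ρ)`,
so a sequence obeying `w (k + 1) ≤ ρ w k + b` approaches that fixed point from below up to a
geometrically vanishing error. A bias term `e k → 0` is absorbed by raising `b` by an arbitrary
`ε (1 - ρ)` from some index on. In the Langevin recursion `ρ = 1 - m h` and
`b = χ L √(h³ d) = χ L h √(h d)`, so the fixed point is `χ L √(h d) / m`.
-/

section AffineRecursion

variable {w : ℕ → ℝ} {ρ : ℝ}

lemma sub_le_pow_mul_sub_of_le_mul_add {b : ℝ} {N : ℕ} (hρ₀ : 0 ≤ ρ) (hρ₁ : ρ < 1)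
    (hrec : ∀ k ≥ N, w (k + 1) ≤ ρ * w k + b) :
    ∀ k ≥ N, w k - b / (1 - ρ) ≤ ρ ^ (k - N) * (w N - b / (1 - ρ)) := by
  have hfix : ρ * (b / (1 - ρ)) + b = b / (1 - ρ) := by
    field_simp [(sub_pos.mpr hρ₁).ne']
    ring
  intro k hk
  induction k, hk using Nat.le_induction with
  | base => simp
  | succ k hk ih =>
    calc w (k + 1) - b / (1 - ρ)
        ≤ ρ * (w k - b / (1 - ρ)) := by linarith [hrec k hk]
      _ ≤ ρ * (ρ ^ (k - N) * (w N - b / (1 - ρ))) := mul_le_mul_of_nonneg_left ih hρ₀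
      _ = ρ ^ (k + 1 - N) * (w N - b / (1 - ρ)) := by
        rw [Nat.sub_add_comm hk, pow_succ]
        ring

lemma limsup_le_of_le_mul_add {b : ℝ} {N : ℕ} (hbdd : IsBoundedUnder (· ≥ ·) atTop w)
    (hρ₀ : 0 ≤ ρ) (hρ₁ : ρ < 1) (hrec : ∀ k ≥ N, w (k + 1) ≤ ρ * w k + b) :
    limsup w atTop ≤ b / (1 - ρ) := by
  set T := b / (1 - ρ)
  have hlim : Tendsto (fun k ↦ T + ρ ^ (k - N) * (w N - T)) atTop (𝓝 T) := by
    have hpow := (tendsto_pow_atTop_nhds_zero_of_lt_one hρ₀ hρ₁).comp (tendsto_sub_atTop_nat N)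
    simpa using tendsto_const_nhds.add (hpow.mul_const (w N - T))
  have hle : ∀ᶠ k in atTop, w k ≤ T + ρ ^ (k - N) * (w N - T) :=
    eventually_atTop.mpr ⟨N, fun k hk ↦ by
      linarith [sub_le_pow_mul_sub_of_le_mul_add hρ₀ hρ₁ hrec k hk]⟩
  calc limsup w atTop ≤ limsup (fun k ↦ T + ρ ^ (k - N) * (w N - T)) atTop :=
        limsup_le_limsup hle hbdd.isCoboundedUnder_le hlim.isBoundedUnder_le
    _ = T := hlim.limsup_eq

lemma limsup_le_of_le_mul_add_of_tendsto_zero {c : ℝ} {e : ℕ → ℝ}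
    (hbdd : IsBoundedUnder (· ≥ ·) atTop w) (hρ₀ : 0 ≤ ρ) (hρ₁ : ρ < 1)
    (he : Tendsto e atTop (𝓝 0)) (hrec : ∀ k, w (k + 1) ≤ ρ * w k + c + e k) :
    limsup w atTop ≤ c / (1 - ρ) := by
  have hgap : 0 < 1 - ρ := sub_pos.mpr hρ₁
  refine le_of_forall_pos_le_add fun ε hε ↦ ?_
  obtain ⟨N, hN⟩ := eventually_atTop.mp
    (he.eventually (eventually_le_nhds (mul_pos hgap hε)))
  have hrec' : ∀ k ≥ N, w (k + 1) ≤ ρ * w k + (c + (1 - ρ) * ε) := fun k hk ↦ by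
    linarith [hrec k, hN k hk]
  calc limsup w atTop ≤ (c + (1 - ρ) * ε) / (1 - ρ) :=
        limsup_le_of_le_mul_add hbdd hρ₀ hρ₁ hrec'
    _ = c / (1 - ρ) + ε := by field_simp

end AffineRecursion

lemma tendsto_const_div_natCast_add_two_atTop (a : ℝ) :
    Tendsto (fun k : ℕ ↦ a / ((k : ℝ) + 2)) atTop (𝓝 0) :=
  tendsto_const_nhds.div_atTop
    (tendsto_atTop_add_const_right _ _ tendsto_natCast_atTop_atTop)

theorem constant_stepsize_wasserstein_limit_general
    (L m d h : ℝ) (hm : 0 < m) (hh : 0 < h)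
    (hmh : m * h ≤ 1)
    (χ : ℝ)
    (ρ : ℝ) (hρ : ρ = 1 - m * h)
    (w : ℕ → ℝ) (hw_nonneg : ∀ k, 0 ≤ w k)
    (hrec : ∀ k : ℕ,
      w (k + 1) ≤ ρ * w k + χ * L * Real.sqrt (h ^ 3 * d) + L * h / ((k : ℝ) + 2)) :
    limsup w atTop ≤ χ * L * Real.sqrt (h * d) / m := by
  have hbdd : IsBoundedUnder (· ≥ ·) atTop w := isBoundedUnder_of ⟨0, hw_nonneg⟩
  have hlim := limsup_le_of_le_mul_add_of_tendsto_zero hbdd (by linarith)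
    (by linarith [mul_pos hm hh])
    (tendsto_const_div_natCast_add_two_atTop (L * h)) hrec
  have hsqrt : Real.sqrt (h ^ 3 * d) = h * Real.sqrt (h * d) := by
    rw [show h ^ 3 * d = h ^ 2 * (h * d) by ring, Real.sqrt_mul (sq_nonneg h),
      Real.sqrt_sq hh.le]
  calc limsup w atTop ≤ χ * L * Real.sqrt (h ^ 3 * d) / (1 - ρ) := hlim
    _ = χ * L * Real.sqrt (h * d) / m := by
      rw [hsqrt, hρ, sub_sub_cancel]
      field_simp

/-- constant step size part of Theorem 3, sequence level.
With `m·h ≤ 1`, `L·h ≤ 1`, `ρ = 1 - m·h` and `χ = 7√2/6`, any nonnegative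
sequence satisfying `w_{k+1} ≤ ρ·w_k + χ·L·√(h³·d) + L·h/(k+2)` has
`limsup_{K→∞} w_K ≤ χ·L·√(h·d)/m`. -/
theorem constant_stepsize_wasserstein_limit
    (L m d h : ℝ) (hL : 0 < L) (hm : 0 < m) (hd : 0 < d) (hh : 0 < h)
    (hmh : m * h ≤ 1) (hLh : L * h ≤ 1)
    (χ : ℝ) (hχ : χ = 7 * Real.sqrt 2 / 6)
    (ρ : ℝ) (hρ : ρ = 1 - m * h)
    (w : ℕ → ℝ) (hw_nonneg : ∀ k, 0 ≤ w k)
    (hrec : ∀ k : ℕ,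
      w (k + 1) ≤ ρ * w k + χ * L * Real.sqrt (h ^ 3 * d) + L * h / ((k : ℝ) + 2)) :
    limsup w atTop ≤ χ * L * Real.sqrt (h * d) / m :=
  constant_stepsize_wasserstein_limit_general L m d h hm hh hmh χ ρ hρ w hw_nonneg hrec
end

section
/- Let L > 0, m > 1, d > 0, and χ = 7√2/6, and set K̂ = (L+m)/2 − 1. Let (w_k) be a sequence of nonnegative reals satisfying, for all integers k ≥ K̂, w_{k+1} ≤ (1 − m/(k+1))·w_k + χ·L·d^{1/2}/(k+1)^{3/2} + L/(k+1)². Then w_k = O(k^{−1/2}); more precisely, limsup_{k→∞} k^{1/2}·w_k ≤ (χ·L·d^{1/2} + L)/((m−1)/2). -/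
/-! Put `u k = √k * w k`, `a = (m - 1) / 2` and `B = χ L √d + L`. Since
`√(k + 1) (1 - m / (k + 1)) ≤ (1 - (m - 1) / (k + 1)) √k`, the recursion for `w` becomes, for large `k`,
`u (k + 1) ≤ (1 - a / (k + 1)) u k + B / (k + 1)`. Then the excess `max (u k - B / a) 0` is
multiplied at each step by `1 - a / (k + 1) ≤ exp (-a / (k + 1))`, and these products tend to `0`
because the harmonic series diverges. -/

open Filter Finset Real

theorem tendsto_zero_of_eventually_le_one_sub_mul {v c : ℕ → ℝ} (hv : ∀ k, 0 ≤ v k)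
    (hc : Tendsto (fun n ↦ ∑ i ∈ range n, c i) atTop atTop)
    (hrec : ∀ᶠ k in atTop, v (k + 1) ≤ (1 - c k) * v k) :
    Tendsto v atTop (nhds 0) := by
  obtain ⟨N, hN⟩ := eventually_atTop.1 hrec
  set S : ℕ → ℝ := fun n ↦ ∑ i ∈ range n, c i
  -- `1 - c ≤ exp (-c)` turns the product of the contraction factors into `exp` of minus a sum.
  have hdecay : ∀ n, N ≤ n → v n ≤ v N * exp (S N - S n) := by
    refine Nat.le_induction (by simp) fun n hn ih ↦ ?_
    calc v (n + 1) ≤ (1 - c n) * v n := hN n hn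
      _ ≤ exp (-c n) * (v N * exp (S N - S n)) := by
        gcongr
        · exact hv n
        · linarith [add_one_le_exp (-c n)]
      _ = v N * exp (S N - S (n + 1)) := by
        rw [mul_left_comm, ← exp_add]
        simp only [S, sum_range_succ]
        ring_nf
  have hbound : Tendsto (fun n ↦ v N * exp (S N - S n)) atTop (nhds 0) := by
    simpa [sub_eq_add_neg] using (tendsto_exp_atBot.comp
      (tendsto_atBot_add_const_left _ (S N) (tendsto_neg_atTop_atBot.comp hc))).const_mul (v N)
  exact squeeze_zero' (Eventually.of_forall hv) (eventually_atTop.2 ⟨N, hdecay⟩) hbound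

theorem limsup_le_of_eventually_le_one_sub_mul_add_mul {u c : ℕ → ℝ} {t : ℝ}
    (hu : IsBoundedUnder (· ≥ ·) atTop u)
    (hc : Tendsto (fun n ↦ ∑ i ∈ range n, c i) atTop atTop) (hc1 : ∀ᶠ k in atTop, c k ≤ 1)
    (hrec : ∀ᶠ k in atTop, u (k + 1) ≤ (1 - c k) * u k + c k * t) :
    limsup u atTop ≤ t := by
  set v : ℕ → ℝ := fun k ↦ max (u k - t) 0
  have hv : Tendsto v atTop (nhds 0) := by
    refine tendsto_zero_of_eventually_le_one_sub_mul (fun k ↦ le_max_right _ _) hc ?_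
    filter_upwards [hc1, hrec] with k hck hk
    have hvk : u k - t ≤ v k := le_max_left _ _
    have hvk0 : 0 ≤ v k := le_max_right _ _
    exact max_le (by nlinarith) (by nlinarith)
  have htv : Tendsto (fun k ↦ t + v k) atTop (nhds t) := by
    simpa using hv.const_add t
  calc limsup u atTop ≤ limsup (fun k ↦ t + v k) atTop :=
        limsup_le_limsup (Eventually.of_forall fun k ↦ by linarith [le_max_left (u k - t) 0])
          hu.isCoboundedUnder_le htv.isBoundedUnder_le
    _ = t := htv.limsup_eq

theorem tendsto_sum_range_div_nat_succ_atTop {a : ℝ} (ha : 0 < a) :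
    Tendsto (fun n ↦ ∑ i ∈ range n, a / ((i : ℝ) + 1)) atTop atTop := by
  simpa [mul_sum, div_eq_mul_inv] using tendsto_sum_range_one_div_nat_succ_atTop.const_mul_atTop ha

theorem limsup_le_div_of_eventually_le_one_sub_div_mul_add_div {u : ℕ → ℝ} {a b : ℝ}
    (ha : 0 < a) (hu : IsBoundedUnder (· ≥ ·) atTop u)
    (hrec : ∀ᶠ k : ℕ in atTop, u (k + 1) ≤ (1 - a / (k + 1)) * u k + b / (k + 1)) :
    limsup u atTop ≤ b / a := by
  refine limsup_le_of_eventually_le_one_sub_mul_add_mul hu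
    (tendsto_sum_range_div_nat_succ_atTop ha) ?_ ?_
  · filter_upwards [(tendsto_natCast_atTop_atTop (R := ℝ)).eventually_ge_atTop a] with k hk
    exact (div_le_one (by positivity)).2 (by linarith)
  · filter_upwards [hrec] with k hk
    convert hk using 2
    field_simp

theorem one_sub_div_mul_sqrt_le {m x : ℝ} (hm : 0 ≤ m) (hmx : m ≤ x) (hx : 2 ≤ x) :
    (1 - m / x) * √x ≤ (1 - (m - 1) / x) * √(x - 1) := by
  have hx0 : 0 < x := by linarith
  have hfac : 0 ≤ 1 - m / x := by rw [sub_nonneg, div_le_one hx0]; exact hmx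
  have hfac' : 0 ≤ 1 - (m - 1) / x := by rw [sub_nonneg, div_le_one hx0]; linarith
  rw [← sqrt_sq hfac, ← sqrt_sq hfac', ← sqrt_mul (sq_nonneg _), ← sqrt_mul (sq_nonneg _)]
  apply sqrt_le_sqrt
  rw [one_sub_div hx0.ne', one_sub_div hx0.ne', div_pow, div_pow, div_mul_eq_mul_div,
    div_mul_eq_mul_div, div_le_div_iff_of_pos_right (by positivity)]
  -- with `y = x - m`, this is `y ^ 2 * x ≤ (y + 1) ^ 2 * (x - 1)`, i.e. `0 ≤ y (2x - y - 2) + x - 1`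
  nlinarith [mul_nonneg (sub_nonneg.2 hmx) (by linarith : (0 : ℝ) ≤ x - 2), mul_nonneg hm (sub_nonneg.2 hmx)]

theorem sqrt_mul_le_of_le_one_sub_div_mul_add {m x C L w w' : ℝ} (hm : 0 ≤ m) (hmx : m ≤ x)
    (hx : 2 ≤ x) (hL : 0 ≤ L) (hw : 0 ≤ w)
    (h : w' ≤ (1 - m / x) * w + C / x ^ ((3 : ℝ) / 2) + L / x ^ 2) :
    √x * w' ≤ (1 - (m - 1) / x) * (√(x - 1) * w) + (C + L) / x := by
  have hx0 : 0 < x := by linarith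
  have hsqrt : 1 ≤ √x := one_le_sqrt.2 (by linarith)
  have hpow : x ^ ((3 : ℝ) / 2) = x * √x := by
    rw [show (3 : ℝ) / 2 = 1 + 1 / 2 by norm_num, rpow_add hx0, rpow_one, sqrt_eq_rpow]
  have hC : √x * (C / x ^ ((3 : ℝ) / 2)) = C / x := by
    rw [hpow]; field_simp
  have hL' : √x * (L / x ^ 2) ≤ L / x := by
    rw [show √x * (L / x ^ 2) = L / x / √x by field_simp; rw [sq_sqrt hx0.le]; ring]
    exact div_le_self (by positivity) hsqrt
  calc √x * w' ≤ √x * ((1 - m / x) * w + C / x ^ ((3 : ℝ) / 2) + L / x ^ 2) := by gcongr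
    _ = (1 - m / x) * √x * w + √x * (C / x ^ ((3 : ℝ) / 2)) + √x * (L / x ^ 2) := by ring
    _ ≤ (1 - (m - 1) / x) * √(x - 1) * w + C / x + L / x := by
        rw [hC]
        linarith [mul_le_mul_of_nonneg_right (one_sub_div_mul_sqrt_le hm hmx hx) hw]
    _ = (1 - (m - 1) / x) * (√(x - 1) * w) + (C + L) / x := by ring

theorem diminishing_stepsize_wasserstein_rate_general
    (L m d : ℝ) (hL : 0 < L) (hm : 1 < m)
    (χ : ℝ)
    (Khat : ℝ)
    (w : ℕ → ℝ) (hw_nonneg : ∀ k, 0 ≤ w k)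
    (hrec : ∀ k : ℕ, Khat ≤ (k : ℝ) →
      w (k + 1) ≤ (1 - m / ((k : ℝ) + 1)) * w k
        + χ * L * Real.sqrt d / ((k : ℝ) + 1) ^ ((3 : ℝ) / 2)
        + L / ((k : ℝ) + 1) ^ 2) :
    limsup (fun k : ℕ => Real.sqrt (k : ℝ) * w k) atTop ≤
      (χ * L * Real.sqrt d + L) / ((m - 1) / 2) := by
  have hu : ∀ k : ℕ, 0 ≤ √(k : ℝ) * w k := fun k ↦ mul_nonneg (sqrt_nonneg _) (hw_nonneg k)
  refine limsup_le_div_of_eventually_le_one_sub_div_mul_add_div (by linarith) ⟨0, ?_⟩ ?_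
  · exact eventually_map.2 (Eventually.of_forall hu)
  filter_upwards [eventually_ge_atTop ⌈Khat⌉₊, eventually_ge_atTop ⌈m⌉₊, eventually_ge_atTop 1]
    with k hkK hkm hk1
  have hkm' : m ≤ (k : ℝ) + 1 := by linarith [Nat.ceil_le.1 hkm]
  have hk1' : (2 : ℝ) ≤ (k : ℝ) + 1 := by linarith [(Nat.one_le_cast (α := ℝ)).2 hk1]
  have hstep := sqrt_mul_le_of_le_one_sub_div_mul_add (by linarith) hkm' hk1' hL.le (hw_nonneg k)
    (hrec k (Nat.ceil_le.1 hkK))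
  rw [add_sub_cancel_right] at hstep
  push_cast
  refine hstep.trans (add_le_add_left (mul_le_mul_of_nonneg_right ?_ (hu k)) _)
  gcongr
  linarith

/-- diminishing step size part of Theorem 3, sequence level.
With `L > 0`, `m > 1`, `d > 0`, `χ = 7√2/6` and `K̂ = (L+m)/2 - 1`, any
nonnegative sequence satisfying, for `k ≥ K̂`,
`w_{k+1} ≤ (1 - m/(k+1))·w_k + χ·L·√d/(k+1)^{3/2} + L/(k+1)²`
has `limsup_{k→∞} √k·w_k ≤ (χ·L·√d + L)/((m-1)/2)`, i.e. `w_k = O(k^{-1/2})`. -/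
theorem diminishing_stepsize_wasserstein_rate
    (L m d : ℝ) (hL : 0 < L) (hm : 1 < m) (hd : 0 < d)
    (χ : ℝ) (hχ : χ = 7 * Real.sqrt 2 / 6)
    (Khat : ℝ) (hKhat : Khat = (L + m) / 2 - 1)
    (w : ℕ → ℝ) (hw_nonneg : ∀ k, 0 ≤ w k)
    (hrec : ∀ k : ℕ, Khat ≤ (k : ℝ) →
      w (k + 1) ≤ (1 - m / ((k : ℝ) + 1)) * w k
        + χ * L * Real.sqrt d / ((k : ℝ) + 1) ^ ((3 : ℝ) / 2)
        + L / ((k : ℝ) + 1) ^ 2) :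
    limsup (fun k : ℕ => Real.sqrt (k : ℝ) * w k) atTop ≤
      (χ * L * Real.sqrt d + L) / ((m - 1) / 2) :=
  diminishing_stepsize_wasserstein_rate_general L m d hL hm χ Khat w hw_nonneg hrec
end
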